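/- Let C1, C2, C3 ∈ R^{2,1} be three points with pairwise non-light-like differences, and let A(u) be the rational quadratic interpolant with weights w1 = 2‖C2−C3‖_M, w2 = −‖C1−C3‖_M, w3 = 2‖C1−C2‖_M (where ‖v‖_M := ⟨v,v⟩_M). Write A in homogeneous coordinates as Ã(u) = (ã_w(u) : ã_x(u) : ã_y(u) : ã_r(u)), with ã_w(u) = w1(u−1)(u−1/2) + w2 u(u−1) + w3 u(u−1/2) and the numerator components likewise. Then there exist real constants q0, q1, q2 such that ã_x(u)^2 + ã_y(u)^2 − ã_r(u)^2 = (q0 + q1 u + q2 u^2)·ã_w(u) identically in u; i.e., the quartic polynomial ã_x^2 + ã_y^2 − ã_r^2 is divisible by the quadratic ã_w. -/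

import Mathlib

/-!
For any quadratic map `Q` and scalars `aᵢ`, polarization gives
`Q(Σ aᵢ Cᵢ) = (Σ aᵢ)(Σ aᵢ Q Cᵢ) - Σ_{i<j} aᵢ aⱼ Q(Cᵢ - Cⱼ)`.
With `aᵢ = wᵢ Bᵢ(u)` for the quadratic basis `Bᵢ` of the interpolant, the first term is
`ã_w(u)` times a quadratic, and the chosen weights make the cross terms cancel identically.
-/

/-- The Minkowski inner product on `ℝ^{2,1}`. -/
def minkInner (v w : Fin 3 → ℝ) : ℝ := v 0 * w 0 + v 1 * w 1 - v 2 * w 2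

namespace QuadraticMap

variable {R M N : Type*} [CommRing R] [AddCommGroup M] [Module R M] [AddCommGroup N] [Module R N]

theorem map_sub_eq_sub_polar (Q : QuadraticMap R M N) (x y : M) :
    Q (x - y) = Q x + Q y - polar Q x y := by
  rw [sub_eq_add_neg, QuadraticMap.map_add ⇑Q, Q.map_neg, polar_neg_right, sub_eq_add_neg]

theorem map_smul_add_smul_add_smul (Q : QuadraticMap R M N) (a b c : R) (x y z : M) :
    Q (a • x + b • y + c • z) =
      (a + b + c) • (a • Q x + b • Q y + c • Q z) -
        ((a * b) • Q (x - y) + (a * c) • Q (x - z) + (b * c) • Q (y - z)) := by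
  rw [QuadraticMap.map_add ⇑Q (a • x + b • y), QuadraticMap.map_add ⇑Q (a • x)]
  simp only [map_sub_eq_sub_polar, QuadraticMap.map_smul, polar_add_left, polar_smul_left,
    polar_smul_right]
  module

end QuadraticMap

def minkowskiForm : QuadraticMap ℝ (Fin 3 → ℝ) ℝ :=
  QuadraticMap.weightedSumSquares ℝ ![1, 1, -1]

theorem minkowskiForm_apply (v : Fin 3 → ℝ) : minkowskiForm v = minkInner v v := by
  simp [minkowskiForm, minkInner, Fin.sum_univ_three]
  ring

theorem minkowski_arc_divisibility_general
    (C1 C2 C3 : Fin 3 → ℝ)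
    (w1 w2 w3 : ℝ)
    (hw1 : w1 = 2 * minkInner (C2 - C3) (C2 - C3))
    (hw2 : w2 = -minkInner (C1 - C3) (C1 - C3))
    (hw3 : w3 = 2 * minkInner (C1 - C2) (C1 - C2))
    (aw ax ay ar : ℝ → ℝ)
    (haw : ∀ u, aw u = w1 * ((u - 1) * (u - 1/2)) + w2 * (u * (u - 1)) + w3 * (u * (u - 1/2)))
    (hax : ∀ u, ax u = w1 * C1 0 * ((u - 1) * (u - 1/2)) + w2 * C2 0 * (u * (u - 1)) +
      w3 * C3 0 * (u * (u - 1/2)))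
    (hay : ∀ u, ay u = w1 * C1 1 * ((u - 1) * (u - 1/2)) + w2 * C2 1 * (u * (u - 1)) +
      w3 * C3 1 * (u * (u - 1/2)))
    (har : ∀ u, ar u = w1 * C1 2 * ((u - 1) * (u - 1/2)) + w2 * C2 2 * (u * (u - 1)) +
      w3 * C3 2 * (u * (u - 1/2))) :
    ∃ q0 q1 q2 : ℝ, ∀ u : ℝ,
      ax u ^ 2 + ay u ^ 2 - ar u ^ 2 = (q0 + q1 * u + q2 * u ^ 2) * aw u := by
  set Q := minkowskiForm
  -- the quotient `Σ wᵢ Bᵢ(u) Q(Cᵢ)`, expanded in powers of `u`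
  refine ⟨w1 * Q C1 / 2, -(3/2) * w1 * Q C1 - w2 * Q C2 - (1/2) * w3 * Q C3,
    w1 * Q C1 + w2 * Q C2 + w3 * Q C3, fun u => ?_⟩
  set a1 := w1 * ((u - 1) * (u - 1/2))
  set a2 := w2 * (u * (u - 1))
  set a3 := w3 * (u * (u - 1/2))
  have hlift : ax u ^ 2 + ay u ^ 2 - ar u ^ 2 = Q (a1 • C1 + a2 • C2 + a3 • C3) := by
    simp only [Q, minkowskiForm_apply, minkInner, hax, hay, har, Pi.add_apply, Pi.smul_apply,
      smul_eq_mul]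
    ring
  -- the cross terms are `Q(C1-C2) Q(C1-C3) Q(C2-C3) (-2 B1B2 + 4 B1B3 - 2 B2B3)`, and
  -- `2 B1B3 = B1B2 + B2B3` for `B1 = (u-1)(u-1/2)`, `B2 = u(u-1)`, `B3 = u(u-1/2)`
  have hcross : a1 * a2 * Q (C1 - C2) + a1 * a3 * Q (C1 - C3) + a2 * a3 * Q (C2 - C3) = 0 := by
    simp only [a1, a2, a3, hw1, hw2, hw3, Q, minkowskiForm_apply]
    ring
  rw [hlift, QuadraticMap.map_smul_add_smul_add_smul, haw]
  simp only [smul_eq_mul]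
  linear_combination -hcross

/-- For the homogeneous rational quadratic interpolant of three points of `ℝ^{2,1}`
with pairwise non-light-like differences and the weights
`w1 = 2‖C2−C3‖_M`, `w2 = −‖C1−C3‖_M`, `w3 = 2‖C1−C2‖_M`, the quartic polynomial
`ã_x² + ã_y² − ã_r²` is divisible by the quadratic weight polynomial `ã_w`;
i.e., the interpolant is a Minkowski arc. -/
theorem minkowski_arc_divisibility
    (C1 C2 C3 : Fin 3 → ℝ)
    (h12 : minkInner (C1 - C2) (C1 - C2) ≠ 0)
    (h13 : minkInner (C1 - C3) (C1 - C3) ≠ 0)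
    (h23 : minkInner (C2 - C3) (C2 - C3) ≠ 0)
    (w1 w2 w3 : ℝ)
    (hw1 : w1 = 2 * minkInner (C2 - C3) (C2 - C3))
    (hw2 : w2 = -minkInner (C1 - C3) (C1 - C3))
    (hw3 : w3 = 2 * minkInner (C1 - C2) (C1 - C2))
    (aw ax ay ar : ℝ → ℝ)
    (haw : ∀ u, aw u = w1 * ((u - 1) * (u - 1/2)) + w2 * (u * (u - 1)) + w3 * (u * (u - 1/2)))
    (hax : ∀ u, ax u = w1 * C1 0 * ((u - 1) * (u - 1/2)) + w2 * C2 0 * (u * (u - 1)) +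
      w3 * C3 0 * (u * (u - 1/2)))
    (hay : ∀ u, ay u = w1 * C1 1 * ((u - 1) * (u - 1/2)) + w2 * C2 1 * (u * (u - 1)) +
      w3 * C3 1 * (u * (u - 1/2)))
    (har : ∀ u, ar u = w1 * C1 2 * ((u - 1) * (u - 1/2)) + w2 * C2 2 * (u * (u - 1)) +
      w3 * C3 2 * (u * (u - 1/2))) :
    ∃ q0 q1 q2 : ℝ, ∀ u : ℝ,
      ax u ^ 2 + ay u ^ 2 - ar u ^ 2 = (q0 + q1 * u + q2 * u ^ 2) * aw u :=
  minkowski_arc_divisibility_general C1 C2 C3 w1 w2 w3 hw1 hw2 hw3 aw ax ay ar haw hax hay har
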